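/- arXiv:2601.19809 — 4 statements merged into one kernel-verified Lean document; each statement's English description precedes it below -/
import Mathlib

section
/- Closure properties of P-finite series: For every product rule P, the class of P-finite series contains the zero series and is closed under scalar multiplication by rationals, addition, the P-product, and left derivatives δ_a for every a ∈ Σ. -/
namespace PSeries

/-- A (formal power) series over alphabet `A` with rational coefficients. -/
abbrev Series (A : Type) : Type := List A → ℚ

/-- Left derivative of a series by a letter. -/
def deriv {A : Type} (a : A) (f : Series A) : Series A := fun w => f (a :: w)

/-- Right derivative of a series by a letter. -/
def derivR {A : Type} (b : A) (f : Series A) : Series A := fun w => f (w ++ [b])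

/-- Reversal of a series. -/
def rev {A : Type} (f : Series A) : Series A := fun w => f w.reverse

/-- Terms over a set of variables `X`:  `u ::= x | 0 | c·u | u + v | u * v`. -/
inductive Term (X : Type) : Type
  | var : X → Term X
  | zero : Term X
  | smul : ℚ → Term X → Term X
  | add : Term X → Term X → Term X
  | mul : Term X → Term X → Term X

namespace Term

/-- Simultaneous substitution of terms for variables. -/
def subst {X Y : Type} : Term X → (X → Term Y) → Term Y
  | var x, ρ => ρ x
  | zero, _ => zero
  | smul c u, ρ => smul c (u.subst ρ)
  | add u v, ρ => add (u.subst ρ) (v.subst ρ)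
  | mul u v, ρ => mul (u.subst ρ) (v.subst ρ)

/-- Semantics of a term on series, with the product symbol interpreted by `m`. -/
def evalS {A X : Type} (m : Series A → Series A → Series A) :
    Term X → (X → Series A) → Series A
  | var x, ρ => ρ x
  | zero, _ => 0
  | smul c u, ρ => c • u.evalS m ρ
  | add u v, ρ => u.evalS m ρ + v.evalS m ρ
  | mul u v, ρ => m (u.evalS m ρ) (v.evalS m ρ)

/-- Evaluation of a term in the rationals (product is rational multiplication). -/
def evalQ {X : Type} : Term X → (X → ℚ) → ℚ
  | var x, F => F x
  | zero, _ => 0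
  | smul c u, F => c * u.evalQ F
  | add u v, F => u.evalQ F + v.evalQ F
  | mul u v, F => u.evalQ F * v.evalQ F

/-- Evaluation of a term in a commutative `ℚ`-algebra. -/
def evalA {R : Type} [CommRing R] [Algebra ℚ R] {X : Type} :
    Term X → (X → R) → R
  | var x, ρ => ρ x
  | zero, _ => 0
  | smul c u, ρ => c • u.evalA ρ
  | add u v, ρ => u.evalA ρ + v.evalA ρ
  | mul u v, ρ => u.evalA ρ * v.evalA ρ

end Term

/-- `m` is the `P`-product for the product rule `P`; that is, `m` satisfies the
two defining equations `(f*g)(ε) = f(ε)·g(ε)` and `δ_a (f*g) = P(f, δ_a f, g, δ_a g)`. -/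
def IsPProduct {A : Type} (P : Term (Fin 4)) (m : Series A → Series A → Series A) : Prop :=
  (∀ f g : Series A, m f g [] = f [] * g []) ∧
  (∀ (f g : Series A) (a : A),
    deriv a (m f g) = P.evalS m ![f, deriv a f, g, deriv a g])

/-- The smallest congruence on terms generated by the axioms of
commutative (not necessarily unital) `ℚ`-algebras. -/
inductive TEq {X : Type} : Term X → Term X → Prop
  | refl (u : Term X) : TEq u u
  | symm {u v : Term X} : TEq u v → TEq v u
  | trans {u v w : Term X} : TEq u v → TEq v w → TEq u w
  | smul_congr (c : ℚ) {u v : Term X} : TEq u v → TEq (.smul c u) (.smul c v)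
  | add_congr {u u' v v' : Term X} : TEq u u' → TEq v v' → TEq (.add u v) (.add u' v')
  | mul_congr {u u' v v' : Term X} : TEq u u' → TEq v v' → TEq (.mul u v) (.mul u' v')
  | one_smul (u : Term X) : TEq (.smul 1 u) u
  | smul_smul (c d : ℚ) (u : Term X) : TEq (.smul c (.smul d u)) (.smul (c * d) u)
  | add_smul (c d : ℚ) (u : Term X) : TEq (.smul (c + d) u) (.add (.smul c u) (.smul d u))
  | smul_add (c : ℚ) (u v : Term X) : TEq (.smul c (.add u v)) (.add (.smul c u) (.smul c v))
  | add_zero (u : Term X) : TEq (.add u .zero) u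
  | add_assoc (u v w : Term X) : TEq (.add (.add u v) w) (.add u (.add v w))
  | add_comm (u v : Term X) : TEq (.add u v) (.add v u)
  | neg_cancel (u : Term X) : TEq (.add u (.smul (-1) u)) .zero
  | mul_addl (u v w : Term X) : TEq (.mul (.add u v) w) (.add (.mul u w) (.mul v w))
  | mul_smull (c : ℚ) (u v : Term X) : TEq (.mul (.smul c u) v) (.smul c (.mul u v))
  | mul_assoc (u v w : Term X) : TEq (.mul (.mul u v) w) (.mul u (.mul v w))
  | mul_comm (u v : Term X) : TEq (.mul u v) (.mul v u)

/-- A product rule `P` (a term over the variables `x = 0, ẋ = 1, y = 2, ẏ = 3`)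
is special: it satisfies (P-add), (P-assoc) and (P-comm) up to the congruence `TEq`.
In the first two equations the six variables are `x = 0, ẋ = 1, y = 2, ẏ = 3, z = 4, ż = 5`. -/
def Special (P : Term (Fin 4)) : Prop :=
  TEq (P.subst (![.add (.var 0) (.var 2), .add (.var 1) (.var 3), .var 4, .var 5] :
        Fin 4 → Term (Fin 6)))
      (.add (P.subst (![.var 0, .var 1, .var 4, .var 5] : Fin 4 → Term (Fin 6)))
            (P.subst (![.var 2, .var 3, .var 4, .var 5] : Fin 4 → Term (Fin 6)))) ∧
  TEq (P.subst (![.var 0, .var 1, .mul (.var 2) (.var 4),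
        P.subst (![.var 2, .var 3, .var 4, .var 5] : Fin 4 → Term (Fin 6))] :
        Fin 4 → Term (Fin 6)))
      (P.subst (![.mul (.var 0) (.var 2),
        P.subst (![.var 0, .var 1, .var 2, .var 3] : Fin 4 → Term (Fin 6)), .var 4, .var 5] :
        Fin 4 → Term (Fin 6))) ∧
  TEq P (P.subst (![.var 2, .var 3, .var 0, .var 1] : Fin 4 → Term (Fin 4)))

/-- A binary operation on series is bilinear, associative and commutative. -/
def IsBAC {A : Type} (m : Series A → Series A → Series A) : Prop :=
  (∀ f g h : Series A, m (f + g) h = m f h + m g h) ∧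
  (∀ (c : ℚ) (f g : Series A), m (c • f) g = c • m f g) ∧
  (∀ f g h : Series A, m f (g + h) = m f g + m f h) ∧
  (∀ (c : ℚ) (f g : Series A), m f (c • g) = c • m f g) ∧
  (∀ f g h : Series A, m (m f g) h = m f (m g h)) ∧
  (∀ f g : Series A, m f g = m g f)

/-- The smallest set of series containing `0` and the generators `G`, closed under
scalar multiplication, addition, and the product `m`. -/
inductive InAlg {A : Type} (m : Series A → Series A → Series A) (G : Set (Series A)) :
    Series A → Prop
  | zero : InAlg m G 0
  | gen {g : Series A} : g ∈ G → InAlg m G g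
  | smul (c : ℚ) {f : Series A} : InAlg m G f → InAlg m G (c • f)
  | add {f g : Series A} : InAlg m G f → InAlg m G g → InAlg m G (f + g)
  | mul {f g : Series A} : InAlg m G f → InAlg m G g → InAlg m G (m f g)

/-- `f` is `P`-finite (w.r.t. the `P`-product `m`): there are finitely many generators
`g 0 = f, g 1, …` all of whose left derivatives lie in the algebra they generate. -/
def PFinite {A : Type} (m : Series A → Series A → Series A) (f : Series A) : Prop :=
  ∃ (k : ℕ) (g : Fin (k + 1) → Series A),
    g 0 = f ∧ ∀ (i : Fin (k + 1)) (a : A), InAlg m (Set.range g) (deriv a (g i))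

/-- A `P`-automaton: output function `out` and transition function `tr`. -/
structure PAutomaton (A X : Type) where
  out : X → ℚ
  tr : A → X → Term X

/-- The `P`-extension of a function `D : X → Term X` to all terms. -/
def pext {X : Type} (P : Term (Fin 4)) (D : X → Term X) : Term X → Term X
  | .var x => D x
  | .zero => .zero
  | .smul c u => .smul c (pext P D u)
  | .add u v => .add (pext P D u) (pext P D v)
  | .mul u v => P.subst ![u, pext P D u, v, pext P D v]

/-- Homomorphic extension of the output function of a `P`-automaton to all terms. -/
def PAutomaton.outT {A X : Type} (𝒜 : PAutomaton A X) (u : Term X) : ℚ :=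
  u.evalQ 𝒜.out

/-- Extension of the (`P`-extended) transition function of a `P`-automaton to words. -/
def trWord {A X : Type} (P : Term (Fin 4)) (𝒜 : PAutomaton A X) :
    List A → Term X → Term X
  | [], u => u
  | a :: w, u => trWord P 𝒜 w (pext P (𝒜.tr a) u)

/-- The semantics of a `P`-automaton: the unique map with `⟦α⟧(ε) = F(α)` and
`δ_a ⟦α⟧ = ⟦Δ̃_a α⟧`; concretely, `⟦α⟧(w) = F(Δ̃_w α)`. -/
def asem {A X : Type} (P : Term (Fin 4)) (𝒜 : PAutomaton A X) (u : Term X) : Series A :=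
  fun w => (trWord P 𝒜 w u).evalQ 𝒜.out

/-- `ℚ[X]⁰`: polynomials in commuting variables `X` with zero constant term. -/
noncomputable def Aug (X : Type) : Submodule ℚ (MvPolynomial X ℚ) where
  carrier := {p | MvPolynomial.coeff 0 p = 0}
  add_mem' := by
    intro a b ha hb
    simp only [Set.mem_setOf_eq, MvPolynomial.coeff_add] at *
    rw [ha, hb, add_zero]
  zero_mem' := by simp
  smul_mem' := by
    intro c p hp
    simp only [Set.mem_setOf_eq, MvPolynomial.coeff_smul] at *
    rw [hp, smul_zero]

/-- The variable `x` as an element of `ℚ[X]⁰`. -/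
noncomputable def Aug.var {X : Type} (x : X) : Aug X :=
  ⟨MvPolynomial.X x, by
    show MvPolynomial.coeff 0 (MvPolynomial.X x) = 0
    simp [MvPolynomial.coeff_X']⟩

/-- The product of two elements of `ℚ[X]⁰`, again in `ℚ[X]⁰`. -/
noncomputable def Aug.mul {X : Type} (p q : Aug X) : Aug X :=
  ⟨(p : MvPolynomial X ℚ) * (q : MvPolynomial X ℚ), by
    show MvPolynomial.coeff 0 _ = 0
    have hp : MvPolynomial.constantCoeff (p : MvPolynomial X ℚ) = 0 := p.2
    have hq : MvPolynomial.constantCoeff (q : MvPolynomial X ℚ) = 0 := q.2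
    have := map_mul MvPolynomial.constantCoeff (p : MvPolynomial X ℚ) (q : MvPolynomial X ℚ)
    simpa [MvPolynomial.constantCoeff_eq, hp, hq] using this⟩

/-- A polynomial `P`-automaton over variables `X`. -/
structure PolyAutomaton (A X : Type) where
  out : X → ℚ
  tr : A → X → Aug X

/-- Extension to words of a family of (extended) transition maps on `ℚ[X]⁰`. -/
noncomputable def trWordP {A X : Type} (Dt : A → (Aug X →ₗ[ℚ] Aug X)) : List A → Aug X → Aug X
  | [], p => p
  | a :: w, p => trWordP Dt w (Dt a p)

/-- The ideal of `ℚ[X]` generated by all polynomials reachable from the initial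
variable `x1` by words of length at most `n`. -/
noncomputable def reachIdeal {A X : Type} (Dt : A → (Aug X →ₗ[ℚ] Aug X)) (x1 : X) (n : ℕ) :
    Ideal (MvPolynomial X ℚ) :=
  Ideal.span {p : MvPolynomial X ℚ |
    ∃ w : List A, w.length ≤ n ∧ p = ((trWordP Dt w (Aug.var x1) : Aug X) : MvPolynomial X ℚ)}


section Aux

variable {A : Type} {m : Series A → Series A → Series A}

theorem InAlg.mono {G G' : Set (Series A)} (h : G ⊆ G') {f : Series A}
    (hf : InAlg m G f) : InAlg m G' f := by
  induction hf with
  | zero => exact .zero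
  | gen hg => exact .gen (h hg)
  | smul c _ ih => exact .smul c ih
  | add _ _ ih1 ih2 => exact .add ih1 ih2
  | mul _ _ ih1 ih2 => exact .mul ih1 ih2

theorem evalS_mem {G : Set (Series A)} {X : Type} (t : Term X) (ρ : X → Series A)
    (h : ∀ x, InAlg m G (ρ x)) : InAlg m G (t.evalS m ρ) := by
  induction t with
  | var x => exact h x
  | zero => exact .zero
  | smul c u ih => exact .smul c ih
  | add u v ih1 ih2 => exact .add ih1 ih2
  | mul u v ih1 ih2 => exact .mul ih1 ih2

theorem deriv_zero (a : A) : deriv a (0 : Series A) = 0 := rfl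

theorem deriv_smul (a : A) (c : ℚ) (f : Series A) :
    deriv a (c • f) = c • deriv a f := rfl

theorem deriv_add (a : A) (f g : Series A) :
    deriv a (f + g) = deriv a f + deriv a g := rfl

theorem deriv_mem (P : Term (Fin 4)) (hm : IsPProduct P m) {G : Set (Series A)}
    (hG : ∀ g ∈ G, ∀ a, InAlg m G (deriv a g)) {f : Series A}
    (hf : InAlg m G f) (a : A) : InAlg m G (deriv a f) := by
  induction hf with
  | zero => rw [deriv_zero]; exact .zero
  | gen hg => exact hG _ hg a
  | smul c _ ih => rw [deriv_smul]; exact .smul c ih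
  | add _ _ ih1 ih2 => rw [deriv_add]; exact .add ih1 ih2
  | @mul f₁ g₁ hf₁ hg₁ ih1 ih2 =>
      rw [hm.2 f₁ g₁ a]
      apply evalS_mem
      intro x
      fin_cases x <;>
        simp only [Matrix.cons_val_zero, Matrix.cons_val_one, Matrix.head_cons,
          Matrix.cons_val_two, Matrix.tail_cons, Matrix.cons_val_three, Matrix.head_fin_const,
          Fin.isValue]
      · exact hf₁
      · exact ih1
      · exact hg₁
      · exact ih2

end Aux

/-- **Closure properties of `P`-finite series.** The class of `P`-finite series contains
the zero series and is closed under scalar multiplication, addition, the `P`-product,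
and left derivatives. -/
theorem pfinite_closure {A : Type} [Fintype A]
    (P : Term (Fin 4)) (m : Series A → Series A → Series A) (hm : IsPProduct P m) :
    PFinite m (0 : Series A) ∧
    (∀ (c : ℚ) (f : Series A), PFinite m f → PFinite m (c • f)) ∧
    (∀ f g : Series A, PFinite m f → PFinite m g → PFinite m (f + g)) ∧
    (∀ f g : Series A, PFinite m f → PFinite m g → PFinite m (m f g)) ∧
    (∀ (f : Series A) (a : A), PFinite m f → PFinite m (deriv a f)) := by
  refine ⟨?_, ?_, ?_, ?_, ?_⟩
  · -- zero
    refine ⟨0, fun _ => 0, rfl, ?_⟩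
    intro i a
    rw [deriv_zero]
    exact .zero
  · -- smul
    rintro c f ⟨k, g, hg0, hg⟩
    refine ⟨k + 1, Fin.cons (c • f) g, Fin.cons_zero _ _, ?_⟩
    have hsub : Set.range g ⊆ Set.range (Fin.cons (c • f) g) := by
      rintro x ⟨j, rfl⟩
      exact ⟨j.succ, Fin.cons_succ _ _ _⟩
    intro i a
    induction i using Fin.cases with
    | zero =>
        rw [Fin.cons_zero, deriv_smul]
        have h0 := hg 0 a
        rw [hg0] at h0
        exact .smul c (h0.mono hsub)
    | succ j =>
        rw [Fin.cons_succ]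
        exact (hg j a).mono hsub
  · -- add
    rintro f g ⟨k1, g1, h10, h1⟩ ⟨k2, g2, h20, h2⟩
    refine ⟨(k1 + 1) + (k2 + 1), Fin.cons (f + g) (Fin.append g1 g2), Fin.cons_zero _ _, ?_⟩
    have hsub1 : Set.range g1 ⊆ Set.range (Fin.cons (f + g) (Fin.append g1 g2)) := by
      rintro x ⟨j, rfl⟩
      exact ⟨(Fin.castAdd (k2 + 1) j).succ, by simp [Fin.cons_succ, Fin.append_left]⟩
    have hsub2 : Set.range g2 ⊆ Set.range (Fin.cons (f + g) (Fin.append g1 g2)) := by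
      rintro x ⟨j, rfl⟩
      exact ⟨(Fin.natAdd (k1 + 1) j).succ, by simp [Fin.cons_succ, Fin.append_right]⟩
    intro i a
    induction i using Fin.cases with
    | zero =>
        rw [Fin.cons_zero, deriv_add]
        have hf' := h1 0 a; rw [h10] at hf'
        have hg' := h2 0 a; rw [h20] at hg'
        exact .add (hf'.mono hsub1) (hg'.mono hsub2)
    | succ j =>
        rw [Fin.cons_succ]
        cases j using Fin.addCases with
        | left j => rw [Fin.append_left]; exact (h1 j a).mono hsub1
        | right j => rw [Fin.append_right]; exact (h2 j a).mono hsub2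
  · -- product
    rintro f g ⟨k1, g1, h10, h1⟩ ⟨k2, g2, h20, h2⟩
    refine ⟨(k1 + 1) + (k2 + 1), Fin.cons (m f g) (Fin.append g1 g2), Fin.cons_zero _ _, ?_⟩
    have hsub1 : Set.range g1 ⊆ Set.range (Fin.cons (m f g) (Fin.append g1 g2)) := by
      rintro x ⟨j, rfl⟩
      exact ⟨(Fin.castAdd (k2 + 1) j).succ, by simp [Fin.cons_succ, Fin.append_left]⟩
    have hsub2 : Set.range g2 ⊆ Set.range (Fin.cons (m f g) (Fin.append g1 g2)) := by
      rintro x ⟨j, rfl⟩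
      exact ⟨(Fin.natAdd (k1 + 1) j).succ, by simp [Fin.cons_succ, Fin.append_right]⟩
    intro i a
    induction i using Fin.cases with
    | zero =>
        rw [Fin.cons_zero, hm.2 f g a]
        apply evalS_mem
        have hfmem : InAlg m (Set.range (Fin.cons (m f g) (Fin.append g1 g2))) f :=
          .gen (hsub1 ⟨0, h10⟩)
        have hgmem : InAlg m (Set.range (Fin.cons (m f g) (Fin.append g1 g2))) g :=
          .gen (hsub2 ⟨0, h20⟩)
        have hf' := h1 0 a; rw [h10] at hf'
        have hg' := h2 0 a; rw [h20] at hg'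
        intro x
        fin_cases x <;>
          simp only [Matrix.cons_val_zero, Matrix.cons_val_one, Matrix.head_cons,
            Matrix.cons_val_two, Matrix.tail_cons, Matrix.cons_val_three, Matrix.head_fin_const,
            Fin.isValue]
        · exact hfmem
        · exact hf'.mono hsub1
        · exact hgmem
        · exact hg'.mono hsub2
    | succ j =>
        rw [Fin.cons_succ]
        cases j using Fin.addCases with
        | left j => rw [Fin.append_left]; exact (h1 j a).mono hsub1
        | right j => rw [Fin.append_right]; exact (h2 j a).mono hsub2
  · -- derivative
    rintro f a ⟨k, g, hg0, hg⟩
    refine ⟨k + 1, Fin.cons (deriv a f) g, Fin.cons_zero _ _, ?_⟩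
    have hsub : Set.range g ⊆ Set.range (Fin.cons (deriv a f) g) := by
      rintro x ⟨j, rfl⟩
      exact ⟨j.succ, Fin.cons_succ _ _ _⟩
    have hG : ∀ h ∈ Set.range g, ∀ c, InAlg m (Set.range g) (deriv c h) := by
      rintro h ⟨j, rfl⟩ c
      exact hg j c
    intro i b
    induction i using Fin.cases with
    | zero =>
        rw [Fin.cons_zero]
        have h0 := hg 0 a
        rw [hg0] at h0
        exact (deriv_mem P hm hG h0 b).mono hsub
    | succ j =>
        rw [Fin.cons_succ]
        exact (hg j b).mono hsub

end PSeries
end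

section
/- Homomorphism lemma: Let P be a product rule and 𝒜 = (X, F, Δ) a P-automaton. Then the semantics of 𝒜 is a homomorphism from terms to series: for every term α ∈ Terms(X), ⟦α⟧_𝒜 = ⟦α⟧_ρ where ρ is the valuation assigning to each variable x ∈ X the series ⟦x⟧_𝒜, and ⟦α⟧_ρ is the term semantics interpreting 0, c·, +, * by the series operations with * the P-product. -/
namespace PSeries

/-- Agreement of two series on all words of length at most `n`. -/
def AgreeN {A : Type} (n : ℕ) (f g : Series A) : Prop :=
  ∀ w : List A, w.length ≤ n → f w = g w

lemma Term.evalS_subst {A X Y : Type} (m : Series A → Series A → Series A)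
    (t : Term X) (σ : X → Term Y) (ρ : Y → Series A) :
    (t.subst σ).evalS m ρ = t.evalS m (fun x => (σ x).evalS m ρ) := by
  induction t with
  | var x => rfl
  | zero => rfl
  | smul c u ih => simp [Term.subst, Term.evalS, ih]
  | add u v ihu ihv => simp [Term.subst, Term.evalS, ihu, ihv]
  | mul u v ihu ihv => simp [Term.subst, Term.evalS, ihu, ihv]

lemma agree_evalS {A X : Type} (m : Series A → Series A → Series A) (k : ℕ)
    (hloc : ∀ f f' g g' : Series A, AgreeN k f f' → AgreeN k g g' →
      AgreeN k (m f g) (m f' g'))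
    (t : Term X) (ev ev' : X → Series A) (hv : ∀ x, AgreeN k (ev x) (ev' x)) :
    AgreeN k (t.evalS m ev) (t.evalS m ev') := by
  induction t with
  | var x => exact hv x
  | zero => intro w hw; rfl
  | smul c u ih =>
    intro w hw
    show c • u.evalS m ev w = c • u.evalS m ev' w
    rw [ih w hw]
  | add u v ihu ihv =>
    intro w hw
    show u.evalS m ev w + v.evalS m ev w = u.evalS m ev' w + v.evalS m ev' w
    rw [ihu w hw, ihv w hw]
  | mul u v ihu ihv => exact hloc _ _ _ _ ihu ihv

lemma loc_mul {A : Type} {P : Term (Fin 4)} {m : Series A → Series A → Series A}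
    (hm : IsPProduct P m) :
    ∀ (n : ℕ) (f f' g g' : Series A), AgreeN n f f' → AgreeN n g g' →
      AgreeN n (m f g) (m f' g') := by
  intro n
  induction n using Nat.strong_induction_on with
  | _ n IH =>
    intro f f' g g' hf hg w hw
    cases w with
    | nil => rw [hm.1, hm.1, hf [] (by simp), hg [] (by simp)]
    | cons a w' =>
      have h1 : m f g (a :: w') = P.evalS m ![f, deriv a f, g, deriv a g] w' :=
        congrFun (hm.2 f g a) w'
      have h2 : m f' g' (a :: w') = P.evalS m ![f', deriv a f', g', deriv a g'] w' :=
        congrFun (hm.2 f' g' a) w'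
      set k := w'.length with hkdef
      have hkn : k + 1 ≤ n := by simpa using hw
      have hk : k < n := hkn
      rw [h1, h2]
      refine agree_evalS m k (IH k hk) _ _ _ ?_ w' le_rfl
      intro i
      have hfk : AgreeN k f f' := fun u hu => hf u (hu.trans hk.le)
      have hgk : AgreeN k g g' := fun u hu => hg u (hu.trans hk.le)
      have hdf : AgreeN k (deriv a f) (deriv a f') := fun u hu =>
        hf (a :: u) (by simpa using Nat.succ_le_of_lt (lt_of_le_of_lt hu hk))
      have hdg : AgreeN k (deriv a g) (deriv a g') := fun u hu =>
        hg (a :: u) (by simpa using Nat.succ_le_of_lt (lt_of_le_of_lt hu hk))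
      fin_cases i <;> simpa using by first | exact hfk | exact hdf | exact hgk | exact hdg

lemma evalS_nil {A X : Type} {P : Term (Fin 4)} {m : Series A → Series A → Series A}
    (hm : IsPProduct P m) (ρ : X → Series A) (α : Term X) :
    α.evalS m ρ [] = α.evalQ (fun x => ρ x []) := by
  induction α with
  | var x => rfl
  | zero => rfl
  | smul c u ih =>
    show c • u.evalS m ρ [] = c * _
    rw [ih]; rfl
  | add u v ihu ihv =>
    show u.evalS m ρ [] + v.evalS m ρ [] = _
    rw [ihu, ihv]; rfl
  | mul u v ihu ihv =>
    show m (u.evalS m ρ) (v.evalS m ρ) [] = _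
    rw [hm.1, ihu, ihv]; rfl

/-- **Homomorphism lemma.** The semantics of a `P`-automaton is a homomorphism from
terms to series: `⟦α⟧_𝒜 = ⟦α⟧_ρ` for the valuation `ρ x = ⟦x⟧_𝒜`. -/
theorem homomorphism_lemma {A : Type} [Fintype A]
    (P : Term (Fin 4)) (m : Series A → Series A → Series A) (hm : IsPProduct P m)
    {X : Type} (𝒜 : PAutomaton A X) (α : Term X) :
    asem P 𝒜 α = α.evalS m (fun x => asem P 𝒜 (.var x)) := by
  set ρ : X → Series A := fun x => asem P 𝒜 (.var x) with hρ
  have main : ∀ (n : ℕ) (w : List A), w.length ≤ n → ∀ α : Term X,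
      asem P 𝒜 α w = α.evalS m ρ w := by
    intro n
    induction n using Nat.strong_induction_on with
    | _ n IH =>
      intro w hw α
      cases w with
      | nil =>
        rw [evalS_nil hm]
        rfl
      | cons a w' =>
        set k := w'.length with hkdef
        have hkn : k + 1 ≤ n := by simpa using hw
        have hk : k < n := hkn
        have C : ∀ (β : Term X) (w'' : List A), w''.length ≤ k →
            Term.evalS m (pext P (𝒜.tr a) β) ρ w'' = Term.evalS m β ρ (a :: w'') := by
          intro β
          induction β with
          | var x =>
            intro w'' hw''
            have h1 := IH k hk w'' hw'' (𝒜.tr a x)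
            show Term.evalS m (𝒜.tr a x) ρ w'' = ρ x (a :: w'')
            rw [← h1]
            rfl
          | zero => intro w'' _; rfl
          | smul c u ih =>
            intro w'' hw''
            show c • Term.evalS m (pext P (𝒜.tr a) u) ρ w'' = c • Term.evalS m u ρ (a :: w'')
            rw [ih w'' hw'']
          | add u v ihu ihv =>
            intro w'' hw''
            show _ + _ = Term.evalS m u ρ (a :: w'') + Term.evalS m v ρ (a :: w'')
            rw [ihu w'' hw'', ihv w'' hw'']
          | mul u v ihu ihv =>
            intro w'' hw''
            show Term.evalS m ((P.subst ![u, pext P (𝒜.tr a) u, v, pext P (𝒜.tr a) v])) ρ w''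
              = m (Term.evalS m u ρ) (Term.evalS m v ρ) (a :: w'')
            have hrhs : m (Term.evalS m u ρ) (Term.evalS m v ρ) (a :: w'')
                = Term.evalS m P ![Term.evalS m u ρ, deriv a (Term.evalS m u ρ),
                    Term.evalS m v ρ, deriv a (Term.evalS m v ρ)] w'' :=
              congrFun (hm.2 (Term.evalS m u ρ) (Term.evalS m v ρ) a) w''
            rw [Term.evalS_subst, hrhs]
            refine agree_evalS m k (loc_mul hm k) _ _ _ ?_ w'' hw''
            intro i
            have h0 : AgreeN k (Term.evalS m u ρ) (Term.evalS m u ρ) := fun _ _ => rfl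
            have h2 : AgreeN k (Term.evalS m v ρ) (Term.evalS m v ρ) := fun _ _ => rfl
            have h1 : AgreeN k (Term.evalS m (pext P (𝒜.tr a) u) ρ)
                (deriv a (Term.evalS m u ρ)) := fun w3 hw3 => ihu w3 hw3
            have h3 : AgreeN k (Term.evalS m (pext P (𝒜.tr a) v) ρ)
                (deriv a (Term.evalS m v ρ)) := fun w3 hw3 => ihv w3 hw3
            fin_cases i <;>
              simpa using by first | exact h0 | exact h1 | exact h2 | exact h3
        calc asem P 𝒜 α (a :: w') = asem P 𝒜 (pext P (𝒜.tr a) α) w' := rfl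
          _ = Term.evalS m (pext P (𝒜.tr a) α) ρ w' := IH k hk w' le_rfl _
          _ = Term.evalS m α ρ (a :: w') := C α w' le_rfl
  funext w
  exact main w.length w le_rfl α

end PSeries
end

section
/- Classification corollary: Let P be a product rule over the alphabet Σ and let * be its P-product on series Σ* → ℚ. Then * is bilinear, associative, and commutative if, and only if, P is simple, i.e., there exist rationals α, β, γ ∈ ℚ with α·γ = β·(β − 1) such that P ≈ α·(x*y) + β·(x*ẏ + ẋ*y) + γ·(ẋ*ẏ). -/
namespace PSeries

/-- The simple form `α·(x*y) + β·(x*ẏ + ẋ*y) + γ·(ẋ*ẏ)` as a term over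
`x = 0, ẋ = 1, y = 2, ẏ = 3`. -/
def simpleForm (a b c : ℚ) : Term (Fin 4) :=
  .add (.smul a (.mul (.var 0) (.var 2)))
    (.add (.smul b (.add (.mul (.var 0) (.var 3)) (.mul (.var 1) (.var 2))))
      (.smul c (.mul (.var 1) (.var 3))))


/-! ### Auxiliary machinery: the free commutative non-unital ℚ-algebra of terms -/

section Syntactic

variable {X : Type}

/-- Soundness of `TEq` for evaluation in any commutative ℚ-algebra. -/
theorem TEq.evalA_eq {R : Type} [CommRing R] [Algebra ℚ R] {u v : Term X}
    (h : TEq u v) (ρ : X → R) : u.evalA ρ = v.evalA ρ := by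
  induction h with
  | refl u => rfl
  | symm _ ih => exact ih.symm
  | trans _ _ ih1 ih2 => exact ih1.trans ih2
  | smul_congr c _ ih => simp [Term.evalA, ih]
  | add_congr _ _ ih1 ih2 => simp [Term.evalA, ih1, ih2]
  | mul_congr _ _ ih1 ih2 => simp [Term.evalA, ih1, ih2]
  | one_smul u => simp [Term.evalA]
  | smul_smul c d u => simp [Term.evalA, _root_.smul_smul]
  | add_smul c d u => simp [Term.evalA, _root_.add_smul]
  | smul_add c u v => simp [Term.evalA, _root_.smul_add]
  | add_zero u => simp [Term.evalA]
  | add_assoc u v w => simp [Term.evalA, _root_.add_assoc]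
  | add_comm u v => simp [Term.evalA]; exact _root_.add_comm _ _
  | neg_cancel u => simp [Term.evalA, neg_one_smul]
  | mul_addl u v w => simp [Term.evalA, _root_.add_mul]
  | mul_smull c u v => simp [Term.evalA, smul_mul_assoc]
  | mul_assoc u v w => simp [Term.evalA, _root_.mul_assoc]
  | mul_comm u v => simp [Term.evalA]; exact _root_.mul_comm _ _

instance termSetoid (X : Type) : Setoid (Term X) :=
  ⟨TEq, ⟨TEq.refl, TEq.symm, TEq.trans⟩⟩

/-- Terms modulo `TEq`. -/
def TQ (X : Type) : Type := Quotient (termSetoid X)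

namespace TQ

instance : Add (TQ X) := ⟨Quotient.map₂ Term.add fun _ _ h _ _ h' => TEq.add_congr h h'⟩
instance : Zero (TQ X) := ⟨⟦.zero⟧⟩
instance : SMul ℚ (TQ X) := ⟨fun c => Quotient.map (Term.smul c) fun _ _ h => TEq.smul_congr c h⟩
instance : Neg (TQ X) := ⟨fun x => ((-1 : ℚ) • x : TQ X)⟩
instance : Mul (TQ X) := ⟨Quotient.map₂ Term.mul fun _ _ h _ _ h' => TEq.mul_congr h h'⟩

def mk (u : Term X) : TQ X := ⟦u⟧

instance : AddCommGroup (TQ X) where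
  add_assoc a b c := Quotient.inductionOn₃ a b c fun u v w => Quotient.sound (TEq.add_assoc u v w)
  zero_add a := Quotient.inductionOn a fun u =>
    Quotient.sound ((TEq.add_comm _ _).trans (TEq.add_zero u))
  add_zero a := Quotient.inductionOn a fun u => Quotient.sound (TEq.add_zero u)
  add_comm a b := Quotient.inductionOn₂ a b fun u v => Quotient.sound (TEq.add_comm u v)
  neg_add_cancel a := Quotient.inductionOn a fun u =>
    Quotient.sound ((TEq.add_comm _ _).trans (TEq.neg_cancel u))
  nsmul := nsmulRec
  zsmul := zsmulRec

theorem teq_zero_smul (u : Term X) : TEq (.smul (0:ℚ) u) .zero := by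
  have h1 : TEq (Term.smul ((1:ℚ) + (-1)) u) (.add (.smul 1 u) (.smul (-1) u)) :=
    TEq.add_smul 1 (-1) u
  rw [show (1:ℚ) + (-1) = 0 by norm_num] at h1
  exact h1.trans ((TEq.add_congr (TEq.one_smul u) (TEq.refl _)).trans (TEq.neg_cancel u))

theorem teq_smul_zero (c : ℚ) : TEq (Term.smul c (.zero : Term X)) .zero := by
  have h1 : TEq (Term.smul c (.zero : Term X)) (.smul c (.smul 0 .zero)) :=
    TEq.smul_congr c (teq_zero_smul Term.zero).symm
  have h2 := (TEq.smul_smul c 0 (.zero : Term X))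
  rw [show c * 0 = 0 by ring] at h2
  exact (h1.trans h2).trans (teq_zero_smul .zero)

instance : Module ℚ (TQ X) where
  one_smul a := Quotient.inductionOn a fun u => Quotient.sound (TEq.one_smul u)
  mul_smul c d a := Quotient.inductionOn a fun u => Quotient.sound (TEq.smul_smul c d u).symm
  smul_zero c := Quotient.sound (teq_smul_zero c)
  smul_add c a b := Quotient.inductionOn₂ a b fun u v => Quotient.sound (TEq.smul_add c u v)
  add_smul c d a := Quotient.inductionOn a fun u => Quotient.sound (TEq.add_smul c d u)
  zero_smul a := Quotient.inductionOn a fun u => Quotient.sound (teq_zero_smul u)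

theorem teq_zero_mul (u : Term X) : TEq (Term.mul .zero u) .zero :=
  ((TEq.mul_congr (teq_zero_smul Term.zero).symm (TEq.refl u)).trans
    (TEq.mul_smull 0 _ u)).trans (teq_zero_smul _)

instance : NonUnitalCommRing (TQ X) where
  left_distrib a b c := Quotient.inductionOn₃ a b c fun u v w =>
    Quotient.sound <| ((TEq.mul_comm u (.add v w)).trans (TEq.mul_addl v w u)).trans
      (TEq.add_congr (TEq.mul_comm v u) (TEq.mul_comm w u))
  right_distrib a b c := Quotient.inductionOn₃ a b c fun u v w =>
    Quotient.sound (TEq.mul_addl u v w)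
  zero_mul a := Quotient.inductionOn a fun u => Quotient.sound (teq_zero_mul u)
  mul_zero a := Quotient.inductionOn a fun u =>
    Quotient.sound ((TEq.mul_comm u .zero).trans (teq_zero_mul u))
  mul_assoc a b c := Quotient.inductionOn₃ a b c fun u v w =>
    Quotient.sound (TEq.mul_assoc u v w)
  mul_comm a b := Quotient.inductionOn₂ a b fun u v => Quotient.sound (TEq.mul_comm u v)

instance : IsScalarTower ℚ (TQ X) (TQ X) :=
  ⟨fun c a b => Quotient.inductionOn₂ a b fun u v =>
    Quotient.sound (TEq.mul_smull c u v)⟩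

instance : SMulCommClass ℚ (TQ X) (TQ X) :=
  ⟨fun c a b => Quotient.inductionOn₂ a b fun u v =>
    Quotient.sound <| (TEq.smul_congr c (TEq.mul_comm u v)).trans
      (((TEq.mul_smull c v u).symm).trans (TEq.mul_comm _ _))⟩

end TQ

/-- The polynomial of a term. -/
noncomputable def toPoly (u : Term X) : MvPolynomial X ℚ := u.evalA MvPolynomial.X

theorem evalA_algHom {R S : Type} [CommRing R] [Algebra ℚ R] [CommRing S] [Algebra ℚ S]
    (φ : R →ₐ[ℚ] S) (u : Term X) (ρ : X → R) :
    φ (u.evalA ρ) = u.evalA (fun x => φ (ρ x)) := by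
  induction u with
  | var x => rfl
  | zero => simp [Term.evalA]
  | smul c u ih => simp [Term.evalA, ih]
  | add u v ih1 ih2 => simp [Term.evalA, ih1, ih2]
  | mul u v ih1 ih2 => simp [Term.evalA, ih1, ih2]

theorem evalA_unitization (u : Term X) :
    u.evalA (fun x => (Unitization.inr (TQ.mk (Term.var x)) : Unitization ℚ (TQ X))) =
      (Unitization.inr (TQ.mk u) : Unitization ℚ (TQ X)) := by
  induction u with
  | var x => rfl
  | zero => exact (Unitization.inr_zero ℚ).symm
  | smul c u ih => rw [Term.evalA, ih, ← Unitization.inr_smul]; rfl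
  | add u v ih1 ih2 => rw [Term.evalA, ih1, ih2, ← Unitization.inr_add]; rfl
  | mul u v ih1 ih2 => rw [Term.evalA, ih1, ih2, ← Unitization.inr_mul]; rfl

/-- Completeness of `TEq` for evaluation in polynomials. -/
theorem TEq.of_toPoly_eq {u v : Term X} (h : toPoly u = toPoly v) : TEq u v := by
  have h2 := congrArg (MvPolynomial.aeval
    (fun x => (Unitization.inr (TQ.mk (Term.var x)) : Unitization ℚ (TQ X)))) h
  rw [toPoly, toPoly, evalA_algHom, evalA_algHom] at h2
  simp only [MvPolynomial.aeval_X] at h2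
  rw [evalA_unitization, evalA_unitization] at h2
  exact Quotient.exact (Unitization.inr_injective h2)

theorem eval_toPoly (u : Term X) (F : X → ℚ) :
    MvPolynomial.eval F (toPoly u) = u.evalQ F := by
  induction u with
  | var x => simp [toPoly, Term.evalA, Term.evalQ]
  | zero => simp [toPoly, Term.evalA, Term.evalQ]
  | smul c u ih => simp only [toPoly, Term.evalA, Term.evalQ, MvPolynomial.smul_eval] at *
                   rw [ih]
  | add u v ih1 ih2 => simp only [toPoly, Term.evalA, Term.evalQ, map_add] at *; rw [ih1, ih2]
  | mul u v ih1 ih2 => simp only [toPoly, Term.evalA, Term.evalQ, map_mul] at *; rw [ih1, ih2]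

end Syntactic

/-! ### Auxiliary machinery: agreement of series up to a length, BAC up to a length -/

section Semantics

variable {A : Type}

/-- `evalS` at the empty word is `evalQ` of the empty-word values. -/
theorem evalS_nil_s6 {X : Type} {m : Series A → Series A → Series A}
    (hm0 : ∀ f g : Series A, m f g [] = f [] * g []) (u : Term X) (ρ : X → Series A) :
    u.evalS m ρ [] = u.evalQ (fun x => ρ x []) := by
  induction u with
  | var x => rfl
  | zero => rfl
  | smul c u ih => simp [Term.evalS, Term.evalQ, ih]
  | add u v ih1 ih2 => simp [Term.evalS, Term.evalQ, ih1, ih2]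
  | mul u v ih1 ih2 => rw [Term.evalS, Term.evalQ, hm0, ih1, ih2]

/-- Two series agree on words of length at most `n`. -/
def Agree (n : ℕ) (f g : Series A) : Prop := ∀ w : List A, w.length ≤ n → f w = g w

theorem Agree.of_eq {n : ℕ} {f g : Series A} (h : f = g) : Agree n f g := fun w _ => by rw [h]

theorem Agree.refl (n : ℕ) (f : Series A) : Agree n f f := fun _ _ => rfl

theorem Agree.symm {n : ℕ} {f g : Series A} (h : Agree n f g) : Agree n g f :=
  fun w hw => (h w hw).symm

theorem Agree.trans {n : ℕ} {f g h : Series A} (h1 : Agree n f g) (h2 : Agree n g h) :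
    Agree n f h := fun w hw => (h1 w hw).trans (h2 w hw)

theorem Agree.mono {n k : ℕ} (hk : k ≤ n) {f g : Series A} (h : Agree n f g) :
    Agree k f g := fun w hw => h w (le_trans hw hk)

theorem Agree.add {n : ℕ} {f f' g g' : Series A} (h1 : Agree n f f') (h2 : Agree n g g') :
    Agree n (f + g) (f' + g') := fun w hw => by
  simp only [Pi.add_apply, h1 w hw, h2 w hw]

theorem Agree.smul {n : ℕ} (c : ℚ) {f f' : Series A} (h1 : Agree n f f') :
    Agree n (c • f) (c • f') := fun w hw => by
  simp only [Pi.smul_apply, h1 w hw]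

theorem Agree.deriv {n : ℕ} (b : A) {f f' : Series A} (h : Agree (n + 1) f f') :
    Agree n (PSeries.deriv b f) (PSeries.deriv b f') := fun w hw =>
  h (b :: w) (by simpa using Nat.succ_le_succ hw)

theorem agree_evalS_s6 {m : Series A → Series A → Series A} {n : ℕ}
    (hc : ∀ f f' g g' : Series A, Agree n f f' → Agree n g g' → Agree n (m f g) (m f' g'))
    {X : Type} (u : Term X) {ρ ρ' : X → Series A} (h : ∀ x, Agree n (ρ x) (ρ' x)) :
    Agree n (u.evalS m ρ) (u.evalS m ρ') := by
  induction u with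
  | var x => exact h x
  | zero => exact Agree.refl n 0
  | smul c u ih => exact Agree.smul c ih
  | add u v ih1 ih2 => exact ih1.add ih2
  | mul u v ih1 ih2 => exact hc _ _ _ _ ih1 ih2

/-- The product of a `P`-product respects agreement up to any fixed length. -/
theorem agree_mul {P : Term (Fin 4)} {m : Series A → Series A → Series A}
    (hm : IsPProduct P m) :
    ∀ n (f f' g g' : Series A), Agree n f f' → Agree n g g' → Agree n (m f g) (m f' g') := by
  intro n
  induction n with
  | zero =>
    intro f f' g g' h1 h2 w hw
    have hwnil : w = [] := List.length_eq_zero_iff.mp (Nat.le_zero.mp hw)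
    subst hwnil
    rw [hm.1, hm.1, h1 [] (le_refl 0), h2 [] (le_refl 0)]
  | succ n ih =>
    intro f f' g g' h1 h2 w hw
    match w with
    | [] => rw [hm.1, hm.1, h1 [] (by simp), h2 [] (by simp)]
    | b :: w' =>
      have hw' : w'.length ≤ n := by simpa using hw
      have e1 : m f g (b :: w') = (P.evalS m ![f, deriv b f, g, deriv b g]) w' :=
        congrFun (hm.2 f g b) w'
      have e2 : m f' g' (b :: w') = (P.evalS m ![f', deriv b f', g', deriv b g']) w' :=
        congrFun (hm.2 f' g' b) w'
      rw [e1, e2]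
      refine agree_evalS_s6 ih P (fun x => ?_) w' hw'
      fin_cases x
      · exact h1.mono (Nat.le_succ n)
      · exact h1.deriv b
      · exact h2.mono (Nat.le_succ n)
      · exact h2.deriv b

/-- The six BAC identities, up to length `n`. -/
def BacN (m : Series A → Series A → Series A) (n : ℕ) : Prop :=
  (∀ f g h : Series A, Agree n (m (f + g) h) (m f h + m g h)) ∧
  (∀ (c : ℚ) (f g : Series A), Agree n (m (c • f) g) (c • m f g)) ∧
  (∀ f g h : Series A, Agree n (m f (g + h)) (m f g + m f h)) ∧
  (∀ (c : ℚ) (f g : Series A), Agree n (m f (c • g)) (c • m f g)) ∧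
  (∀ f g h : Series A, Agree n (m (m f g) h) (m f (m g h))) ∧
  (∀ f g : Series A, Agree n (m f g) (m g f))

/-- Soundness of `TEq` for `evalS`, up to length `n`, assuming BAC up to `n`. -/
theorem agree_TEq {m : Series A → Series A → Series A} {n : ℕ}
    (hc : ∀ f f' g g' : Series A, Agree n f f' → Agree n g g' → Agree n (m f g) (m f' g'))
    (hB : BacN m n) {X : Type} {u v : Term X} (h : TEq u v) (ρ : X → Series A) :
    Agree n (u.evalS m ρ) (v.evalS m ρ) := by
  induction h with
  | refl u => exact Agree.refl n _
  | symm _ ih => exact ih.symm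
  | trans _ _ ih1 ih2 => exact ih1.trans ih2
  | smul_congr c _ ih => exact Agree.smul c ih
  | add_congr _ _ ih1 ih2 => exact ih1.add ih2
  | mul_congr _ _ ih1 ih2 => exact hc _ _ _ _ ih1 ih2
  | one_smul u => exact Agree.of_eq (one_smul ℚ _)
  | smul_smul c d u => exact Agree.of_eq (smul_smul c d _)
  | add_smul c d u => exact Agree.of_eq (add_smul c d _)
  | smul_add c u v => exact Agree.of_eq (smul_add c _ _)
  | add_zero u => exact Agree.of_eq (add_zero _)
  | add_assoc u v w => exact Agree.of_eq (add_assoc _ _ _)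
  | add_comm u v => exact Agree.of_eq (add_comm _ _)
  | neg_cancel u => exact Agree.of_eq (show Term.evalS m u ρ + (-1 : ℚ) • Term.evalS m u ρ = 0
      by rw [neg_one_smul]; exact add_neg_cancel _)
  | mul_addl u v w => exact hB.1 _ _ _
  | mul_smull c u v => exact hB.2.1 c _ _
  | mul_assoc u v w => exact hB.2.2.2.2.1 _ _ _
  | mul_comm u v => exact hB.2.2.2.2.2 _ _

theorem simpleForm_evalS {m : Series A → Series A → Series A} (a b c : ℚ)
    (f f' g g' : Series A) :
    (simpleForm a b c).evalS m ![f, f', g, g'] =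
      a • m f g + (b • (m f g' + m f' g) + c • m f' g') := rfl

/-- Main induction for the "if" direction:  a simple product rule yields a BAC product. -/
theorem bacN_all {P : Term (Fin 4)} {m : Series A → Series A → Series A}
    (hm : IsPProduct P m) {a b c : ℚ} (hcon : a * c = b * (b - 1))
    (hteq : TEq P (simpleForm a b c)) : ∀ n, BacN m n := by
  intro n
  induction n with
  | zero =>
    refine ⟨fun f g h => ?_, fun d f g => ?_, fun f g h => ?_, fun d f g => ?_,
      fun f g h => ?_, fun f g => ?_⟩ <;>
      · intro w hw
        have hwnil : w = [] := List.length_eq_zero_iff.mp (Nat.le_zero.mp hw)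
        subst hwnil
        simp only [Pi.add_apply, Pi.smul_apply, smul_eq_mul, hm.1]
        ring
  | succ n IH =>
    -- pointwise versions of the inductive hypothesis
    have ihA : ∀ (f g h : Series A) (w : List A), w.length ≤ n →
        m (f + g) h w = m f h w + m g h w := fun f g h w hw => by
      have := IH.1 f g h w hw; simpa using this
    have ihS : ∀ (d : ℚ) (f g : Series A) (w : List A), w.length ≤ n →
        m (d • f) g w = d * m f g w := fun d f g w hw => by
      have := IH.2.1 d f g w hw; simpa using this
    have ihAR : ∀ (f g h : Series A) (w : List A), w.length ≤ n →
        m f (g + h) w = m f g w + m f h w := fun f g h w hw => by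
      have := IH.2.2.1 f g h w hw; simpa using this
    have ihSR : ∀ (d : ℚ) (f g : Series A) (w : List A), w.length ≤ n →
        m f (d • g) w = d * m f g w := fun d f g w hw => by
      have := IH.2.2.2.1 d f g w hw; simpa using this
    have ihAs : ∀ (f g h : Series A) (w : List A), w.length ≤ n →
        m (m f g) h w = m f (m g h) w := fun f g h w hw => IH.2.2.2.2.1 f g h w hw
    have ihC : ∀ (f g : Series A) (w : List A), w.length ≤ n →
        m f g w = m g f w := fun f g w hw => IH.2.2.2.2.2 f g w hw
    -- the key derivative formula, up to length n
    have key : ∀ (f g : Series A) (bb : A), Agree n (deriv bb (m f g))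
        (a • m f g + (b • (m f (deriv bb g) + m (deriv bb f) g) +
          c • m (deriv bb f) (deriv bb g))) := by
      intro f g bb
      rw [hm.2 f g bb]
      have h2 := agree_TEq (agree_mul hm n) IH hteq ![f, deriv bb f, g, deriv bb g]
      rwa [simpleForm_evalS] at h2
    have keyP : ∀ (f g : Series A) (bb : A) (w : List A), w.length ≤ n →
        m f g (bb :: w) = a * m f g w +
          (b * m f (deriv bb g) w + b * m (deriv bb f) g w +
            c * m (deriv bb f) (deriv bb g) w) := by
      intro f g bb w hw
      have := key f g bb w hw
      simpa [deriv, Pi.add_apply, Pi.smul_apply, smul_eq_mul] using this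
    have dadd : ∀ (f g : Series A) (bb : A),
        deriv bb (f + g) = deriv bb f + deriv bb g := fun _ _ _ => rfl
    have dsmul : ∀ (d : ℚ) (f : Series A) (bb : A),
        deriv bb (d • f) = d • deriv bb f := fun _ _ _ => rfl
    refine ⟨?_, ?_, ?_, ?_, ?_, ?_⟩
    · -- left additivity
      intro f g h w hw
      match w with
      | [] => simp only [Pi.add_apply, hm.1]; ring
      | bb :: w' =>
        have hw' : w'.length ≤ n := by simpa using hw
        have L := keyP (f + g) h bb w' hw'
        rw [dadd] at L
        rw [L, Pi.add_apply, keyP f h bb w' hw', keyP g h bb w' hw',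
          ihA f g h w' hw', ihA f g (deriv bb h) w' hw',
          ihA (deriv bb f) (deriv bb g) h w' hw',
          ihA (deriv bb f) (deriv bb g) (deriv bb h) w' hw']
        ring
    · -- left scalars
      intro d f g w hw
      match w with
      | [] => simp only [Pi.smul_apply, smul_eq_mul, hm.1]; ring
      | bb :: w' =>
        have hw' : w'.length ≤ n := by simpa using hw
        have L := keyP (d • f) g bb w' hw'
        rw [dsmul] at L
        rw [L, Pi.smul_apply, smul_eq_mul, keyP f g bb w' hw',
          ihS d f g w' hw', ihS d f (deriv bb g) w' hw',
          ihS d (deriv bb f) g w' hw', ihS d (deriv bb f) (deriv bb g) w' hw']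
        ring
    · -- right additivity
      intro f g h w hw
      match w with
      | [] => simp only [Pi.add_apply, hm.1]; ring
      | bb :: w' =>
        have hw' : w'.length ≤ n := by simpa using hw
        have L := keyP f (g + h) bb w' hw'
        rw [dadd] at L
        rw [L, Pi.add_apply, keyP f g bb w' hw', keyP f h bb w' hw',
          ihAR f g h w' hw', ihAR f (deriv bb g) (deriv bb h) w' hw',
          ihAR (deriv bb f) g h w' hw',
          ihAR (deriv bb f) (deriv bb g) (deriv bb h) w' hw']
        ring
    · -- right scalars
      intro d f g w hw
      match w with
      | [] => simp only [Pi.smul_apply, smul_eq_mul, hm.1]; ring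
      | bb :: w' =>
        have hw' : w'.length ≤ n := by simpa using hw
        have L := keyP f (d • g) bb w' hw'
        rw [dsmul] at L
        rw [L, Pi.smul_apply, smul_eq_mul, keyP f g bb w' hw',
          ihSR d f g w' hw', ihSR d f (deriv bb g) w' hw',
          ihSR d (deriv bb f) g w' hw', ihSR d (deriv bb f) (deriv bb g) w' hw']
        ring
    · -- associativity
      intro f g h w hw
      match w with
      | [] => simp only [hm.1]; ring
      | bb :: w' =>
        have hw' : w'.length ≤ n := by simpa using hw
        have expandL : ∀ (u1 u2 u3 u4 hh : Series A),
            m (a • u1 + (b • (u2 + u3) + c • u4)) hh w' =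
              a * m u1 hh w' + (b * (m u2 hh w' + m u3 hh w') + c * m u4 hh w') := by
          intro u1 u2 u3 u4 hh
          rw [ihA _ _ _ w' hw', ihA _ _ _ w' hw', ihS a _ _ w' hw', ihS b _ _ w' hw',
            ihS c _ _ w' hw', ihA u2 u3 hh w' hw']
        have expandR : ∀ (u1 u2 u3 u4 ff : Series A),
            m ff (a • u1 + (b • (u2 + u3) + c • u4)) w' =
              a * m ff u1 w' + (b * (m ff u2 w' + m ff u3 w') + c * m ff u4 w') := by
          intro u1 u2 u3 u4 ff
          rw [ihAR _ _ _ w' hw', ihAR _ _ _ w' hw', ihSR a _ _ w' hw', ihSR b _ _ w' hw',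
            ihSR c _ _ w' hw', ihAR ff u2 u3 w' hw']
        have d1 : m (deriv bb (m f g)) h w' =
            a * m (m f g) h w' + (b * (m (m f (deriv bb g)) h w' +
              m (m (deriv bb f) g) h w') + c * m (m (deriv bb f) (deriv bb g)) h w') :=
          (agree_mul hm n _ _ _ _ (key f g bb) (Agree.refl n h) w' hw').trans (expandL _ _ _ _ _)
        have d2 : m (deriv bb (m f g)) (deriv bb h) w' =
            a * m (m f g) (deriv bb h) w' + (b * (m (m f (deriv bb g)) (deriv bb h) w' +
              m (m (deriv bb f) g) (deriv bb h) w') +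
              c * m (m (deriv bb f) (deriv bb g)) (deriv bb h) w') :=
          (agree_mul hm n _ _ _ _ (key f g bb) (Agree.refl n (deriv bb h)) w' hw').trans
            (expandL _ _ _ _ _)
        have e1 : m f (deriv bb (m g h)) w' =
            a * m f (m g h) w' + (b * (m f (m g (deriv bb h)) w' +
              m f (m (deriv bb g) h) w') + c * m f (m (deriv bb g) (deriv bb h)) w') :=
          (agree_mul hm n _ _ _ _ (Agree.refl n f) (key g h bb) w' hw').trans (expandR _ _ _ _ _)
        have e2 : m (deriv bb f) (deriv bb (m g h)) w' =
            a * m (deriv bb f) (m g h) w' + (b * (m (deriv bb f) (m g (deriv bb h)) w' +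
              m (deriv bb f) (m (deriv bb g) h) w') +
              c * m (deriv bb f) (m (deriv bb g) (deriv bb h)) w') :=
          (agree_mul hm n _ _ _ _ (Agree.refl n (deriv bb f)) (key g h bb) w' hw').trans
            (expandR _ _ _ _ _)
        rw [keyP (m f g) h bb w' hw', keyP f (m g h) bb w' hw', d1, d2, e1, e2,
          ihAs f g h w' hw', ihAs f g (deriv bb h) w' hw',
          ihAs f (deriv bb g) h w' hw', ihAs (deriv bb f) g h w' hw',
          ihAs f (deriv bb g) (deriv bb h) w' hw', ihAs (deriv bb f) g (deriv bb h) w' hw',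
          ihAs (deriv bb f) (deriv bb g) h w' hw',
          ihAs (deriv bb f) (deriv bb g) (deriv bb h) w' hw']
        linear_combination (m f (m g (deriv bb h)) w' - m (deriv bb f) (m g h) w') * hcon
    · -- commutativity
      intro f g w hw
      match w with
      | [] => simp only [hm.1]; ring
      | bb :: w' =>
        have hw' : w'.length ≤ n := by simpa using hw
        rw [keyP f g bb w' hw', keyP g f bb w' hw',
          ihC f g w' hw', ihC f (deriv bb g) w' hw', ihC (deriv bb f) g w' hw',
          ihC (deriv bb f) (deriv bb g) w' hw']
        ring

/-- Soundness of `TEq` for `evalS` with a BAC product. -/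
theorem TEq.evalS_eq {m : Series A → Series A → Series A} (hB : IsBAC m)
    {X : Type} {u v : Term X} (h : TEq u v) (ρ : X → Series A) :
    u.evalS m ρ = v.evalS m ρ := by
  induction h with
  | refl u => rfl
  | symm _ ih => exact ih.symm
  | trans _ _ ih1 ih2 => exact ih1.trans ih2
  | smul_congr c _ ih => simp only [Term.evalS, ih]
  | add_congr _ _ ih1 ih2 => simp only [Term.evalS, ih1, ih2]
  | mul_congr _ _ ih1 ih2 => simp only [Term.evalS, ih1, ih2]
  | one_smul u => exact _root_.one_smul ℚ _
  | smul_smul c d u => exact _root_.smul_smul c d _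
  | add_smul c d u => exact _root_.add_smul c d _
  | smul_add c u v => exact _root_.smul_add c _ _
  | add_zero u => exact _root_.add_zero _
  | add_assoc u v w => exact _root_.add_assoc _ _ _
  | add_comm u v => exact _root_.add_comm _ _
  | neg_cancel u => show Term.evalS m u ρ + (-1 : ℚ) • Term.evalS m u ρ = 0
                    rw [neg_one_smul]; exact add_neg_cancel _
  | mul_addl u v w => exact hB.1 _ _ _
  | mul_smull c u v => exact hB.2.1 c _ _
  | mul_assoc u v w => exact hB.2.2.2.2.1 _ _ _
  | mul_comm u v => exact hB.2.2.2.2.2 _ _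

/-- Test series taking value `r` on the empty word and `r'` on one-letter words. -/
def tstS (r r' : ℚ) : Series A := fun w =>
  match w with
  | [] => r
  | [_] => r'
  | _ => 0

theorem tstS_lin (r r' : ℚ) : (tstS r r' : Series A) = r • tstS 1 0 + r' • tstS 0 1 := by
  funext w
  rcases w with _ | ⟨x, _ | ⟨y, t⟩⟩ <;>
    simp [tstS, Pi.add_apply, Pi.smul_apply, smul_eq_mul]

end Semantics

/-- **Classification corollary.** The `P`-product is bilinear, associative and commutative
iff `P` is simple: `P ≈ α·(x*y) + β·(x*ẏ + ẋ*y) + γ·(ẋ*ẏ)` with `α·γ = β·(β − 1)`. -/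
theorem classification {A : Type} [Fintype A] [Nonempty A]
    (P : Term (Fin 4)) (m : Series A → Series A → Series A) (hm : IsPProduct P m) :
    IsBAC m ↔
      ∃ a b c : ℚ, a * c = b * (b - 1) ∧ TEq P (simpleForm a b c) := by
  obtain ⟨hm0, hm1⟩ := hm
  constructor
  · intro hB
    obtain ⟨hAl, hSl, hAr, hSr, hAs, hC⟩ := hB
    have a₀ : A := Classical.arbitrary A
    have K : ∀ f g : Series A,
        m f g [a₀] = P.evalQ ![f [], deriv a₀ f [], g [], deriv a₀ g []] := by
      intro f g
      have h1 : m f g [a₀] = (P.evalS m ![f, deriv a₀ f, g, deriv a₀ g]) [] :=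
        congrFun (hm1 f g a₀) []
      rw [h1, evalS_nil_s6 hm0]
      congr 1
      funext x
      fin_cases x <;> rfl
    set e₁ : Series A := tstS 1 0 with he₁
    set e₂ : Series A := tstS 0 1 with he₂
    set α : ℚ := m e₁ e₁ [a₀] with hα
    set β : ℚ := m e₁ e₂ [a₀] with hβ
    set γ : ℚ := m e₂ e₂ [a₀] with hγ
    have hββ : m e₂ e₁ [a₀] = β := by rw [hβ, hC e₂ e₁]
    have expand : ∀ r r' s s' : ℚ, m (tstS r r') (tstS s s') =
        r • (s • m e₁ e₁ + s' • m e₁ e₂) + r' • (s • m e₂ e₁ + s' • m e₂ e₂) := by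
      intro r r' s s'
      rw [tstS_lin r r', tstS_lin s s', ← he₁, ← he₂,
        hAl, hSl, hSl, hAr, hAr, hSr, hSr, hSr, hSr]
    have main : ∀ F : Fin 4 → ℚ, P.evalQ F =
        F 0 * (F 2 * α + F 3 * β) + F 1 * (F 2 * β + F 3 * γ) := by
      intro F
      have hF : F = ![F 0, F 1, F 2, F 3] := by funext x; fin_cases x <;> rfl
      have hv : m (tstS (F 0) (F 1)) (tstS (F 2) (F 3)) [a₀] =
          P.evalQ ![F 0, F 1, F 2, F 3] := by
        exact K _ _
      have hv2 : m (tstS (F 0) (F 1)) (tstS (F 2) (F 3)) [a₀] =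
          F 0 * (F 2 * α + F 3 * β) + F 1 * (F 2 * β + F 3 * γ) := by
        rw [expand]
        simp only [Pi.add_apply, Pi.smul_apply, smul_eq_mul]
        rw [hββ, ← hα, ← hβ, ← hγ]
      rw [congrArg P.evalQ hF, ← hv, hv2]
    have hpoly : toPoly P = toPoly (simpleForm α β γ) := by
      apply MvPolynomial.funext
      intro x
      rw [eval_toPoly, eval_toPoly, main x]
      simp only [simpleForm, Term.evalQ]
      ring
    have hTEq : TEq P (simpleForm α β γ) := TEq.of_toPoly_eq hpoly
    have hBAC : IsBAC m := ⟨hAl, hSl, hAr, hSr, hAs, hC⟩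
    have dm : ∀ (f g : Series A) (bb : A), deriv bb (m f g) =
        α • m f g + (β • (m f (deriv bb g) + m (deriv bb f) g) +
          γ • m (deriv bb f) (deriv bb g)) := by
      intro f g bb
      rw [hm1 f g bb, hTEq.evalS_eq hBAC ![f, deriv bb f, g, deriv bb g], simpleForm_evalS]
    have val : ∀ f g : Series A, m f g [a₀] =
        α * (f [] * g []) + (β * (f [] * g [a₀] + f [a₀] * g []) +
          γ * (f [a₀] * g [a₀])) := by
      intro f g
      have h1 : m f g [a₀] = (deriv a₀ (m f g)) [] := rfl
      rw [h1, dm]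
      simp only [Pi.add_apply, Pi.smul_apply, smul_eq_mul, hm0]
      rfl
    have HA := congrFun (hAs e₁ e₁ e₂) [a₀]
    rw [val (m e₁ e₁) e₂, val e₁ (m e₁ e₂), ← hα, ← hβ, hm0, hm0] at HA
    have v1 : (e₁ : Series A) [] = 1 := rfl
    have v2 : (e₁ : Series A) [a₀] = 0 := rfl
    have v3 : (e₂ : Series A) [] = 0 := rfl
    have v4 : (e₂ : Series A) [a₀] = 1 := rfl
    rw [v1, v2, v3, v4] at HA
    refine ⟨α, β, γ, ?_, hTEq⟩
    linear_combination HA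
  · rintro ⟨a, b, c, hcon, hteq⟩
    have hBn := bacN_all ⟨hm0, hm1⟩ hcon hteq
    exact ⟨fun f g h => funext fun w => (hBn w.length).1 f g h w le_rfl,
      fun c f g => funext fun w => (hBn w.length).2.1 c f g w le_rfl,
      fun f g h => funext fun w => (hBn w.length).2.2.1 f g h w le_rfl,
      fun c f g => funext fun w => (hBn w.length).2.2.2.1 c f g w le_rfl,
      fun f g h => funext fun w => (hBn w.length).2.2.2.2.1 f g h w le_rfl,
      fun f g => funext fun w => (hBn w.length).2.2.2.2.2 f g w le_rfl⟩

end PSeries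
end

section
/- Invariance lemma: Let P be a special product rule, let D : X → Terms(X) be any function, and let D̃ be its P-extension to all terms. Then for all terms u, v ∈ Terms(X), if u ≈ v then D̃u ≈ D̃v. -/
namespace PSeries

/-! ### Auxiliary lemmas for the invariance theorem -/

theorem Term.subst_subst {X Y Z : Type} (t : Term X) (σ : X → Term Y) (ρ : Y → Term Z) :
    (t.subst σ).subst ρ = t.subst (fun x => (σ x).subst ρ) := by
  induction t <;> simp [Term.subst, *]

instance {X : Type} : Trans (@TEq X) (@TEq X) (@TEq X) := ⟨TEq.trans⟩

local infix:50 " ≋ " => TEq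

theorem teq_subst {X Y : Type} {s t : Term X} (ρ : X → Term Y) (h : TEq s t) :
    TEq (s.subst ρ) (t.subst ρ) := by
  induction h with
  | refl u => exact .refl _
  | symm _ ih => exact .symm ih
  | trans _ _ ih1 ih2 => exact .trans ih1 ih2
  | smul_congr c _ ih => exact .smul_congr c ih
  | add_congr _ _ ih1 ih2 => exact .add_congr ih1 ih2
  | mul_congr _ _ ih1 ih2 => exact .mul_congr ih1 ih2
  | one_smul u => exact .one_smul _
  | smul_smul c d u => exact .smul_smul _ _ _
  | add_smul c d u => exact .add_smul _ _ _
  | smul_add c u v => exact .smul_add _ _ _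
  | add_zero u => exact .add_zero _
  | add_assoc u v w => exact .add_assoc _ _ _
  | add_comm u v => exact .add_comm _ _
  | neg_cancel u => exact .neg_cancel _
  | mul_addl u v w => exact .mul_addl _ _ _
  | mul_smull c u v => exact .mul_smull _ _ _
  | mul_assoc u v w => exact .mul_assoc _ _ _
  | mul_comm u v => exact .mul_comm _ _

theorem teq_subst_congr {X Y : Type} (t : Term X) {ρ ρ' : X → Term Y}
    (h : ∀ x, TEq (ρ x) (ρ' x)) : TEq (t.subst ρ) (t.subst ρ') := by
  induction t with
  | var x => exact h x
  | zero => exact .refl _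
  | smul c u ih => exact .smul_congr c ih
  | add u v ih1 ih2 => exact .add_congr ih1 ih2
  | mul u v ih1 ih2 => exact .mul_congr ih1 ih2

theorem teq_smul_of_eq {X : Type} {c d : ℚ} (h : c = d) (u : Term X) :
    TEq (.smul c u) (.smul d u) := h ▸ TEq.refl _

theorem teq_zero_smul {X : Type} (u : Term X) : TEq (Term.smul 0 u) Term.zero := by
  have h1 : TEq (Term.smul (0 : ℚ) u) (Term.add (Term.smul (-1) u) (Term.smul 1 u)) := by
    have := TEq.add_smul (-1 : ℚ) 1 u
    norm_num at this
    exact this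
  calc Term.smul (0 : ℚ) u
      ≋ Term.add (Term.smul (-1) u) (Term.smul 1 u) := h1
    _ ≋ Term.add (Term.smul (-1) u) u := .add_congr (.refl _) (.one_smul u)
    _ ≋ Term.add u (Term.smul (-1) u) := .add_comm _ _
    _ ≋ Term.zero := .neg_cancel u

theorem teq_cancel {X : Type} {a b c : Term X}
    (h : TEq (.add a b) (.add a c)) : TEq b c := by
  calc b ≋ Term.add b Term.zero := .symm (.add_zero b)
    _ ≋ Term.add b (Term.add a (Term.smul (-1) a)) :=
        .add_congr (.refl _) (.symm (.neg_cancel a))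
    _ ≋ Term.add (Term.add b a) (Term.smul (-1) a) := .symm (.add_assoc _ _ _)
    _ ≋ Term.add (Term.add a b) (Term.smul (-1) a) := .add_congr (.add_comm _ _) (.refl _)
    _ ≋ Term.add (Term.add a c) (Term.smul (-1) a) := .add_congr h (.refl _)
    _ ≋ Term.add (Term.add c a) (Term.smul (-1) a) := .add_congr (.add_comm _ _) (.refl _)
    _ ≋ Term.add c (Term.add a (Term.smul (-1) a)) := .add_assoc _ _ _
    _ ≋ Term.add c Term.zero := .add_congr (.refl _) (.neg_cancel a)
    _ ≋ c := .add_zero c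

theorem teq_smul_cancel {X : Type} {c : ℚ} (hc : c ≠ 0) {a b : Term X}
    (h : TEq (.smul c a) (.smul c b)) : TEq a b := by
  calc a ≋ Term.smul 1 a := .symm (.one_smul a)
    _ ≋ Term.smul (c⁻¹ * c) a := teq_smul_of_eq (by field_simp) a
    _ ≋ Term.smul c⁻¹ (Term.smul c a) := .symm (.smul_smul _ _ _)
    _ ≋ Term.smul c⁻¹ (Term.smul c b) := .smul_congr _ h
    _ ≋ Term.smul (c⁻¹ * c) b := .smul_smul _ _ _
    _ ≋ Term.smul 1 b := teq_smul_of_eq (by field_simp) b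
    _ ≋ b := .one_smul b

/-- The product operation on terms induced by a product rule `P`. -/
def Q {X : Type} (P : Term (Fin 4)) (a b g d : Term X) : Term X :=
  P.subst ![a, b, g, d]

theorem Q_congr {X : Type} (P : Term (Fin 4)) {a a' b b' g g' d d' : Term X}
    (ha : TEq a a') (hb : TEq b b') (hg : TEq g g') (hd : TEq d d') :
    TEq (Q P a b g d) (Q P a' b' g' d') := by
  apply teq_subst_congr
  intro i
  fin_cases i <;> simpa using ‹_›

theorem Padd {X : Type} {P : Term (Fin 4)} (hP : Special P) (a b a' b' g d : Term X) :
    TEq (Q P (.add a a') (.add b b') g d) (.add (Q P a b g d) (Q P a' b' g d)) := by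
  have h := teq_subst (![a, b, a', b', g, d] : Fin 6 → Term X) hP.1
  rw [Term.subst] at h
  rw [Term.subst_subst, Term.subst_subst, Term.subst_subst] at h
  have e1 : (fun x => ((![Term.add (.var 0) (.var 2), .add (.var 1) (.var 3), .var 4, .var 5] :
      Fin 4 → Term (Fin 6)) x).subst (![a, b, a', b', g, d] : Fin 6 → Term X)) =
      ![Term.add a a', .add b b', g, d] := by
    funext i; fin_cases i <;> rfl
  have e2 : (fun x => ((![Term.var 0, .var 1, .var 4, .var 5] :
      Fin 4 → Term (Fin 6)) x).subst (![a, b, a', b', g, d] : Fin 6 → Term X)) =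
      ![a, b, g, d] := by
    funext i; fin_cases i <;> rfl
  have e3 : (fun x => ((![Term.var 2, .var 3, .var 4, .var 5] :
      Fin 4 → Term (Fin 6)) x).subst (![a, b, a', b', g, d] : Fin 6 → Term X)) =
      ![a', b', g, d] := by
    funext i; fin_cases i <;> rfl
  rw [e1, e2, e3] at h
  exact h

theorem Pzero {X : Type} {P : Term (Fin 4)} (hP : Special P) (a b g d : Term X) :
    TEq (Q P (.smul 0 a) (.smul 0 b) g d) .zero := by
  have habs : ∀ u : Term X, TEq u (Term.add u (Term.smul 0 u)) := by
    intro u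
    calc u ≋ Term.smul 1 u := .symm (.one_smul u)
      _ ≋ Term.smul (1 + 0) u := teq_smul_of_eq (by norm_num) u
      _ ≋ Term.add (Term.smul 1 u) (Term.smul 0 u) := .add_smul _ _ _
      _ ≋ Term.add u (Term.smul 0 u) := .add_congr (.one_smul u) (.refl _)
  have key : TEq (.add (Q P a b g d) Term.zero) (.add (Q P a b g d) (Q P (.smul 0 a) (.smul 0 b) g d)) := by
    calc Term.add (Q P a b g d) Term.zero
        ≋ Q P a b g d := .add_zero _
      _ ≋ Q P (.add a (.smul 0 a)) (.add b (.smul 0 b)) g d :=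
          Q_congr P (habs a) (habs b) (.refl _) (.refl _)
      _ ≋ .add (Q P a b g d) (Q P (.smul 0 a) (.smul 0 b) g d) := Padd hP a b _ _ g d
  exact .symm (teq_cancel key)

theorem Pnat {X : Type} {P : Term (Fin 4)} (hP : Special P) (n : ℕ) (a b g d : Term X) :
    TEq (Q P (.smul (n : ℚ) a) (.smul (n : ℚ) b) g d) (.smul (n : ℚ) (Q P a b g d)) := by
  induction n with
  | zero =>
    calc Q P (.smul ((0 : ℕ) : ℚ) a) (.smul ((0 : ℕ) : ℚ) b) g d
        ≋ Q P (.smul 0 a) (.smul 0 b) g d :=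
          Q_congr P (teq_smul_of_eq (by norm_num) a) (teq_smul_of_eq (by norm_num) b)
            (.refl _) (.refl _)
      _ ≋ Term.zero := Pzero hP a b g d
      _ ≋ Term.smul 0 (Q P a b g d) := .symm (teq_zero_smul _)
      _ ≋ Term.smul ((0 : ℕ) : ℚ) (Q P a b g d) := teq_smul_of_eq (by norm_num) _
  | succ n ih =>
    have hcast : ((n + 1 : ℕ) : ℚ) = (n : ℚ) + 1 := by push_cast; ring
    have hsplit : ∀ u : Term X, TEq (Term.smul ((n + 1 : ℕ) : ℚ) u)
        (Term.add (Term.smul (n : ℚ) u) u) := by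
      intro u
      calc Term.smul ((n + 1 : ℕ) : ℚ) u
          ≋ Term.smul ((n : ℚ) + 1) u := teq_smul_of_eq hcast u
        _ ≋ Term.add (Term.smul (n : ℚ) u) (Term.smul 1 u) := .add_smul _ _ _
        _ ≋ Term.add (Term.smul (n : ℚ) u) u := .add_congr (.refl _) (.one_smul u)
    calc Q P (.smul ((n + 1 : ℕ) : ℚ) a) (.smul ((n + 1 : ℕ) : ℚ) b) g d
        ≋ Q P (.add (.smul (n : ℚ) a) a) (.add (.smul (n : ℚ) b) b) g d :=
          Q_congr P (hsplit a) (hsplit b) (.refl _) (.refl _)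
      _ ≋ .add (Q P (.smul (n : ℚ) a) (.smul (n : ℚ) b) g d) (Q P a b g d) :=
          Padd hP _ _ a b g d
      _ ≋ .add (.smul (n : ℚ) (Q P a b g d)) (.smul 1 (Q P a b g d)) :=
          .add_congr ih (.symm (.one_smul _))
      _ ≋ .smul ((n : ℚ) + 1) (Q P a b g d) := .symm (.add_smul _ _ _)
      _ ≋ .smul ((n + 1 : ℕ) : ℚ) (Q P a b g d) := teq_smul_of_eq hcast.symm _

theorem Pint {X : Type} {P : Term (Fin 4)} (hP : Special P) (z : ℤ) (a b g d : Term X) :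
    TEq (Q P (.smul (z : ℚ) a) (.smul (z : ℚ) b) g d) (.smul (z : ℚ) (Q P a b g d)) := by
  obtain ⟨n⟩ | ⟨n⟩ := z
  · have : ((Int.ofNat n : ℤ) : ℚ) = (n : ℚ) := by norm_cast
    rw [this]; exact Pnat hP n a b g d
  · set m : ℕ := n + 1 with hm
    have hz : ((Int.negSucc n : ℤ) : ℚ) = -(m : ℚ) := by
      rw [hm]; push_cast [Int.negSucc_eq]; ring
    rw [hz]
    -- sum with m-fold copy cancels
    have hsum : ∀ u : Term X, TEq (Term.add (Term.smul (-(m : ℚ)) u) (Term.smul (m : ℚ) u))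
        (Term.smul 0 u) := by
      intro u
      calc Term.add (Term.smul (-(m : ℚ)) u) (Term.smul (m : ℚ) u)
          ≋ Term.smul (-(m : ℚ) + (m : ℚ)) u := .symm (.add_smul _ _ _)
        _ ≋ Term.smul 0 u := teq_smul_of_eq (by ring) u
    have h1 : TEq (.add (Q P (.smul (-(m : ℚ)) a) (.smul (-(m : ℚ)) b) g d)
        (.smul (m : ℚ) (Q P a b g d))) Term.zero := by
      calc Term.add (Q P (.smul (-(m : ℚ)) a) (.smul (-(m : ℚ)) b) g d)
            (.smul (m : ℚ) (Q P a b g d))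
          ≋ Term.add (Q P (.smul (-(m : ℚ)) a) (.smul (-(m : ℚ)) b) g d)
            (Q P (.smul (m : ℚ) a) (.smul (m : ℚ) b) g d) :=
            .add_congr (.refl _) (.symm (Pnat hP m a b g d))
        _ ≋ Q P (.add (.smul (-(m : ℚ)) a) (.smul (m : ℚ) a))
            (.add (.smul (-(m : ℚ)) b) (.smul (m : ℚ) b)) g d := .symm (Padd hP _ _ _ _ g d)
        _ ≋ Q P (.smul 0 a) (.smul 0 b) g d :=
            Q_congr P (hsum a) (hsum b) (.refl _) (.refl _)
        _ ≋ Term.zero := Pzero hP a b g d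
    have h2 : TEq (.add (Term.smul (-(m : ℚ)) (Q P a b g d))
        (.smul (m : ℚ) (Q P a b g d))) Term.zero := by
      calc Term.add (Term.smul (-(m : ℚ)) (Q P a b g d)) (.smul (m : ℚ) (Q P a b g d))
          ≋ Term.smul 0 (Q P a b g d) := hsum _
        _ ≋ Term.zero := teq_zero_smul _
    apply teq_cancel (a := Term.smul (m : ℚ) (Q P a b g d))
    calc Term.add (Term.smul (m : ℚ) (Q P a b g d))
          (Q P (.smul (-(m : ℚ)) a) (.smul (-(m : ℚ)) b) g d)
        ≋ Term.add (Q P (.smul (-(m : ℚ)) a) (.smul (-(m : ℚ)) b) g d)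
          (Term.smul (m : ℚ) (Q P a b g d)) := .add_comm _ _
      _ ≋ Term.zero := h1
      _ ≋ Term.add (Term.smul (-(m : ℚ)) (Q P a b g d))
          (.smul (m : ℚ) (Q P a b g d)) := .symm h2
      _ ≋ Term.add (Term.smul (m : ℚ) (Q P a b g d))
          (Term.smul (-(m : ℚ)) (Q P a b g d)) := .add_comm _ _

theorem Pscal {X : Type} {P : Term (Fin 4)} (hP : Special P) (c : ℚ) (a b g d : Term X) :
    TEq (Q P (.smul c a) (.smul c b) g d) (.smul c (Q P a b g d)) := by
  have hden : ((c.den : ℤ) : ℚ) ≠ 0 := by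
    exact_mod_cast (Nat.cast_ne_zero (R := ℚ)).mpr c.den_nz
  have hpq : ((c.den : ℤ) : ℚ) * c = (c.num : ℚ) := by
    push_cast
    rw [mul_comm, Rat.mul_den_eq_num]
  apply teq_smul_cancel hden
  have hmerge : ∀ u : Term X, TEq (Term.smul ((c.den : ℤ) : ℚ) (Term.smul c u))
      (Term.smul (c.num : ℚ) u) := by
    intro u
    calc Term.smul ((c.den : ℤ) : ℚ) (Term.smul c u)
        ≋ Term.smul (((c.den : ℤ) : ℚ) * c) u := .smul_smul _ _ _
      _ ≋ Term.smul (c.num : ℚ) u := teq_smul_of_eq hpq u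
  calc Term.smul ((c.den : ℤ) : ℚ) (Q P (.smul c a) (.smul c b) g d)
      ≋ Q P (.smul ((c.den : ℤ) : ℚ) (.smul c a)) (.smul ((c.den : ℤ) : ℚ) (.smul c b)) g d :=
        .symm (Pint hP c.den _ _ g d)
    _ ≋ Q P (.smul (c.num : ℚ) a) (.smul (c.num : ℚ) b) g d :=
        Q_congr P (hmerge a) (hmerge b) (.refl _) (.refl _)
    _ ≋ Term.smul (c.num : ℚ) (Q P a b g d) := Pint hP c.num a b g d
    _ ≋ Term.smul (((c.den : ℤ) : ℚ) * c) (Q P a b g d) := teq_smul_of_eq hpq.symm _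
    _ ≋ Term.smul ((c.den : ℤ) : ℚ) (Term.smul c (Q P a b g d)) := .symm (.smul_smul _ _ _)

theorem Passoc {X : Type} {P : Term (Fin 4)} (hP : Special P) (a b a' b' g d : Term X) :
    TEq (Q P a b (.mul a' g) (Q P a' b' g d)) (Q P (.mul a a') (Q P a b a' b') g d) := by
  have h := teq_subst (![a, b, a', b', g, d] : Fin 6 → Term X) hP.2.1
  rw [Term.subst_subst, Term.subst_subst] at h
  have e1 : (fun x => ((![Term.var 0, .var 1, .mul (.var 2) (.var 4),
      P.subst (![.var 2, .var 3, .var 4, .var 5] : Fin 4 → Term (Fin 6))] :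
      Fin 4 → Term (Fin 6)) x).subst (![a, b, a', b', g, d] : Fin 6 → Term X)) =
      ![a, b, .mul a' g, Q P a' b' g d] := by
    funext i
    fin_cases i
    · rfl
    · rfl
    · rfl
    · show (P.subst _).subst _ = _
      rw [Term.subst_subst]
      congr 1
      funext j; fin_cases j <;> rfl
  have e2 : (fun x => ((![Term.mul (.var 0) (.var 2),
      P.subst (![.var 0, .var 1, .var 2, .var 3] : Fin 4 → Term (Fin 6)), .var 4, .var 5] :
      Fin 4 → Term (Fin 6)) x).subst (![a, b, a', b', g, d] : Fin 6 → Term X)) =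
      ![Term.mul a a', Q P a b a' b', g, d] := by
    funext i
    fin_cases i
    · rfl
    · show (P.subst _).subst _ = _
      rw [Term.subst_subst]
      congr 1
      funext j; fin_cases j <;> rfl
    · rfl
    · rfl
  rw [e1, e2] at h
  exact h

theorem Pcomm {X : Type} {P : Term (Fin 4)} (hP : Special P) (a b g d : Term X) :
    TEq (Q P a b g d) (Q P g d a b) := by
  have h := teq_subst (![a, b, g, d] : Fin 4 → Term X) hP.2.2
  rw [Term.subst_subst] at h
  have e : (fun x => ((![Term.var 2, .var 3, .var 0, .var 1] :
      Fin 4 → Term (Fin 4)) x).subst (![a, b, g, d] : Fin 4 → Term X)) =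
      ![g, d, a, b] := by
    funext i; fin_cases i <;> rfl
  rw [e] at h
  exact h

/-- **Invariance lemma.** For a special product rule `P`, the `P`-extension of any
function `D : X → Terms(X)` preserves the congruence `≈`. -/
theorem invariance {X : Type} (P : Term (Fin 4)) (hP : Special P)
    (D : X → Term X) (u v : Term X) (huv : TEq u v) :
    TEq (pext P D u) (pext P D v) := by
  induction huv with
  | refl u => exact .refl _
  | symm _ ih => exact .symm ih
  | trans _ _ ih1 ih2 => exact .trans ih1 ih2
  | smul_congr c _ ih => exact .smul_congr c ih
  | add_congr _ _ ih1 ih2 => exact .add_congr ih1 ih2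
  | @mul_congr u u' w w' hu hw ih1 ih2 =>
    show TEq (Q P u (pext P D u) w (pext P D w)) (Q P u' (pext P D u') w' (pext P D w'))
    exact Q_congr P hu ih1 hw ih2
  | one_smul u => exact .one_smul _
  | smul_smul c d u => exact .smul_smul _ _ _
  | add_smul c d u => exact .add_smul _ _ _
  | smul_add c u v => exact .smul_add _ _ _
  | add_zero u => exact .add_zero _
  | add_assoc u v w => exact .add_assoc _ _ _
  | add_comm u v => exact .add_comm _ _
  | neg_cancel u => exact .neg_cancel _
  | mul_addl u v w =>
    show TEq (Q P (.add u v) (.add (pext P D u) (pext P D v)) w (pext P D w))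
      (.add (Q P u (pext P D u) w (pext P D w)) (Q P v (pext P D v) w (pext P D w)))
    exact Padd hP _ _ _ _ _ _
  | mul_smull c u v =>
    show TEq (Q P (.smul c u) (.smul c (pext P D u)) v (pext P D v))
      (.smul c (Q P u (pext P D u) v (pext P D v)))
    exact Pscal hP c _ _ _ _
  | mul_assoc u v w =>
    show TEq (Q P (.mul u v) (Q P u (pext P D u) v (pext P D v)) w (pext P D w))
      (Q P u (pext P D u) (.mul v w) (Q P v (pext P D v) w (pext P D w)))
    exact .symm (Passoc hP _ _ _ _ _ _)
  | mul_comm u v =>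
    show TEq (Q P u (pext P D u) v (pext P D v)) (Q P v (pext P D v) u (pext P D u))
    exact Pcomm hP _ _ _ _

end PSeries
end
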